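/- arXiv:2404.10950 — 3 statements merged into one kernel-verified Lean document; each statement's English description precedes it below -/
import Mathlib

section
/- Let α ∈ (1,∞), let p_X be a strictly positive probability distribution on 𝒳 and p_{Y|X} a channel with p_{Y|X}(y|x) > 0 for all x, y. Then I_α^{LP} = sup over strictly positive probability distributions q̃_{X,Y} on 𝒳×𝒴 and strictly positive reverse channels r_{X|Y} of F̃_α^{LP}(q̃_{X,Y}, r_{X|Y}) := (α/(1−α)) D(q̃_{X,Y} ‖ q̃_X p_{Y|X}) + Σ_{x,y} q̃_{X,Y}(x,y) log( r_{X|Y}(x|y) / q̃_X(x) ) + (α/(1−α)) D(q̃_X ‖ p_X), where q̃_X(x) := Σ_y q̃_{X,Y}(x,y), and the supremum is attained. -/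
/-- A probability mass function on a finite type. -/
def IsPMF {Z : Type*} [Fintype Z] (q : Z → ℝ) : Prop :=
  (∀ z, 0 ≤ q z) ∧ ∑ z, q z = 1

/-- Kullback--Leibler divergence (natural log). -/
noncomputable def klD {Z : Type*} [Fintype Z] (p q : Z → ℝ) : ℝ :=
  ∑ z, p z * Real.log (p z / q z)

/-- Rényi divergence of order `α`, valued in `EReal` (equal to `⊤` when `α > 1` and
`q` vanishes somewhere on the support of `p`). -/
noncomputable def renyiDE {Z : Type*} [Fintype Z] (α : ℝ) (p q : Z → ℝ) : EReal :=
  if 1 < α ∧ ∃ z, p z ≠ 0 ∧ q z = 0 then ⊤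
  else (((1 / (α - 1)) * Real.log (∑ z, p z ^ α * q z ^ (1 - α)) : ℝ) : EReal)

/-- Lapidoth--Pfister mutual information of order `α`. -/
noncomputable def lpMI {X Y : Type*} [Fintype X] [Fintype Y]
    (α : ℝ) (pX : X → ℝ) (pYX : X → Y → ℝ) : EReal :=
  sInf {v : EReal | ∃ qX : X → ℝ, ∃ qY : Y → ℝ, IsPMF qX ∧ IsPMF qY ∧
    v = renyiDE α (fun z : X × Y => pX z.1 * pYX z.1 z.2)
          (fun z : X × Y => qX z.1 * qY z.2)}

/-! Write `p = p_X p_{Y|X}` and `S(u, v) = ∑ p ^ α (u ⊗ v) ^ (1 - α)`, so that `I_α^{LP}` is the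
infimum of `log S(u, v) / (α - 1)` over strictly positive `u`, `v`. For the tilted distribution
`q* ∝ p ^ α (u ⊗ v) ^ (1 - α)`, the functional splits as
`F̃ = (log S(u, v) - D(q̃ ‖ q*)) / (α - 1) - D(q̃ ‖ v r) - D(q̃_X ‖ u)`,
so Gibbs' inequality gives `F̃ ≤ log S(u, v) / (α - 1)` for every `(u, v)`. Since `S` blows up at
the boundary of the simplices, it has an interior minimiser; there the first-order conditions say
that `q*` has marginals `u` and `v`, and `q̃ = q*`, `r = q* / v` make all three divergences
vanish. -/

open Finset Real Filter Topology

noncomputable section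

def openSimplex (Z : Type*) [Fintype Z] : Set (Z → ℝ) :=
  {q | (∀ z, 0 < q z) ∧ ∑ z, q z = 1}

section Simplex

variable {Z : Type*} [Fintype Z]

lemma openSimplex_subset_stdSimplex : openSimplex Z ⊆ stdSimplex ℝ Z :=
  fun _ hq => ⟨fun z => (hq.1 z).le, hq.2⟩

lemma le_one_of_mem_openSimplex {q : Z → ℝ} (hq : q ∈ openSimplex Z) (z : Z) : q z ≤ 1 :=
  hq.2 ▸ single_le_sum (fun i _ => (hq.1 i).le) (mem_univ z)

lemma openSimplex_nonempty [Nonempty Z] : (openSimplex Z).Nonempty := by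
  have hcard : (0 : ℝ) < Fintype.card Z := by exact_mod_cast Fintype.card_pos
  exact ⟨fun _ => (Fintype.card Z : ℝ)⁻¹, fun _ => inv_pos.2 hcard, by simp [card_univ]⟩

lemma isCompact_setOf_stdSimplex_le (ε : ℝ) :
    IsCompact {q ∈ stdSimplex ℝ Z | ∀ z, ε ≤ q z} :=
  (isCompact_stdSimplex ℝ Z).inter_right (isClosed_Ici (a := fun _ => ε))

theorem sum_mul_log_div_nonpos {f g : Z → ℝ} (hf : f ∈ openSimplex Z) (hg : g ∈ openSimplex Z) :
    ∑ z, f z * log (g z / f z) ≤ 0 := by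
  have hle : ∀ z, f z * log (g z / f z) ≤ g z - f z := fun z => by
    have := mul_le_mul_of_nonneg_left
      (log_le_sub_one_of_pos (div_pos (hg.1 z) (hf.1 z))) (hf.1 z).le
    rwa [mul_sub, mul_div_cancel₀ _ (hf.1 z).ne', mul_one] at this
  calc ∑ z, f z * log (g z / f z) ≤ ∑ z, (g z - f z) := sum_le_sum fun z _ => hle z
    _ = 0 := by rw [sum_sub_distrib, hf.2, hg.2, sub_self]

theorem IsMinOn.hasDerivAt_eq_of_openSimplex {f : Z → ℝ → ℝ} {f' : Z → ℝ} {q : Z → ℝ}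
    (hmin : IsMinOn (fun u => ∑ z, f z (u z)) (openSimplex Z) q) (hq : q ∈ openSimplex Z)
    (hf : ∀ z, HasDerivAt (f z) (f' z) (q z)) (i j : Z) : f' i = f' j := by
  classical
  set e : Z → ℝ := fun z => (if z = i then 1 else 0) - (if z = j then 1 else 0)
  have hline : ∀ᶠ t in 𝓝 (0 : ℝ), (fun z => q z + t * e z) ∈ openSimplex Z := by
    have hpos : ∀ᶠ t in 𝓝 (0 : ℝ), ∀ z, 0 < q z + t * e z := eventually_all.2 fun z =>
      (continuous_const.add (continuous_id.mul continuous_const)).continuousAt.eventually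
        (lt_mem_nhds (by simpa using hq.1 z))
    filter_upwards [hpos] with t ht
    refine ⟨ht, ?_⟩
    simp [e, sum_add_distrib, hq.2, mul_sub]
  have hloc : IsLocalMin (fun t => ∑ z, f z (q z + t * e z)) 0 := by
    filter_upwards [hline] with t ht
    simpa using hmin ht
  have hderiv : HasDerivAt (fun t => ∑ z, f z (q z + t * e z)) (∑ z, f' z * e z) 0 :=
    HasDerivAt.fun_sum fun z _ => (hf z).comp_of_eq 0
      (by simpa using ((hasDerivAt_id (0 : ℝ)).mul_const (e z)).const_add (q z)) (by simp)
  have := hloc.hasDerivAt_eq_zero hderiv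
  simp only [e, mul_sub, mul_ite, mul_one, mul_zero, sum_sub_distrib, sum_ite_eq', mem_univ,
    if_true] at this
  linarith

theorem mul_rpow_eq_of_isMinOn {a q : Z → ℝ} {γ : ℝ} (hγ : γ ≠ 0)
    (hmin : IsMinOn (fun u => ∑ z, a z * u z ^ γ) (openSimplex Z) q) (hq : q ∈ openSimplex Z)
    (i : Z) : a i * q i ^ γ = (∑ z, a z * q z ^ γ) * q i := by
  have hpow : ∀ z, a z * q z ^ γ = a z * q z ^ (γ - 1) * q z := fun z => by
    rw [rpow_sub_one (hq.1 z).ne', mul_assoc, div_mul_cancel₀ _ (hq.1 z).ne']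
  have hslope : ∀ z, a z * q z ^ (γ - 1) = a i * q i ^ (γ - 1) := fun z =>
    mul_left_cancel₀ hγ <| by
      simpa [mul_left_comm γ] using hmin.hasDerivAt_eq_of_openSimplex hq
        (fun z => ((hasDerivAt_rpow_const (Or.inl (hq.1 z).ne')).const_mul (a z))) z i
  simp only [hpow, hslope, ← mul_sum, hq.2, mul_one]

end Simplex

section Renyi

variable {X Y : Type*} [Fintype X] [Fintype Y] (α : ℝ) (p : X × Y → ℝ)

/-- `exp ((α - 1) D_α(p ‖ u ⊗ v))`. -/
def renyiSum (u : X → ℝ) (v : Y → ℝ) : ℝ :=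
  ∑ z, p z ^ α * (u z.1 * v z.2) ^ (1 - α)

def tilted (u : X → ℝ) (v : Y → ℝ) (z : X × Y) : ℝ :=
  p z ^ α * (u z.1 * v z.2) ^ (1 - α) / renyiSum α p u v

variable {α p} {u : X → ℝ} {v : Y → ℝ}

lemma renyiSum_eq_sum_fst (hu : ∀ x, 0 ≤ u x) (hv : ∀ y, 0 ≤ v y) :
    renyiSum α p u v = ∑ x, (∑ y, p (x, y) ^ α * v y ^ (1 - α)) * u x ^ (1 - α) := by
  simp only [renyiSum, Fintype.sum_prod_type, sum_mul]
  exact sum_congr rfl fun x _ => sum_congr rfl fun y _ => by rw [mul_rpow (hu x) (hv y)]; ring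

lemma renyiSum_eq_sum_snd (hu : ∀ x, 0 ≤ u x) (hv : ∀ y, 0 ≤ v y) :
    renyiSum α p u v = ∑ y, (∑ x, p (x, y) ^ α * u x ^ (1 - α)) * v y ^ (1 - α) := by
  simp only [renyiSum, Fintype.sum_prod_type_right, sum_mul]
  exact sum_congr rfl fun y _ => sum_congr rfl fun x _ => by rw [mul_rpow (hu x) (hv y)]; ring

lemma renyiSum_pos (hp : ∀ z, 0 < p z) (hu : u ∈ openSimplex X) (hv : v ∈ openSimplex Y) :
    0 < renyiSum α p u v := by
  have : (univ : Finset (X × Y)).Nonempty := by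
    rw [univ_product_univ.symm]
    exact (nonempty_of_sum_ne_zero (hu.2.symm ▸ one_ne_zero)).product
      (nonempty_of_sum_ne_zero (hv.2.symm ▸ one_ne_zero))
  exact sum_pos (fun z _ => mul_pos (rpow_pos_of_pos (hp z) α)
    (rpow_pos_of_pos (mul_pos (hu.1 z.1) (hv.1 z.2)) _)) this

lemma tilted_mem_openSimplex (hp : ∀ z, 0 < p z) (hu : u ∈ openSimplex X)
    (hv : v ∈ openSimplex Y) : tilted α p u v ∈ openSimplex (X × Y) :=
  ⟨fun z => div_pos (mul_pos (rpow_pos_of_pos (hp z) α)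
      (rpow_pos_of_pos (mul_pos (hu.1 z.1) (hv.1 z.2)) _)) (renyiSum_pos hp hu hv), by
    simp only [tilted]
    rw [← sum_div]
    exact div_self (renyiSum_pos hp hu hv).ne'⟩

lemma rpow_le_renyiSum (hα : 1 ≤ α) (hp : ∀ z, 0 < p z) (hu : u ∈ openSimplex X)
    (hv : v ∈ openSimplex Y) {ε : ℝ} {x : X} {y : Y} (hxy : u x * v y ≤ ε) :
    p (x, y) ^ α * ε ^ (1 - α) ≤ renyiSum α p u v := by
  have huv := mul_pos (hu.1 x) (hv.1 y)
  calc p (x, y) ^ α * ε ^ (1 - α) ≤ p (x, y) ^ α * (u x * v y) ^ (1 - α) :=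
        mul_le_mul_of_nonneg_left (rpow_le_rpow_of_nonpos huv hxy (by linarith))
          (rpow_pos_of_pos (hp _) α).le
    _ ≤ renyiSum α p u v :=
        single_le_sum (f := fun z : X × Y => p z ^ α * (u z.1 * v z.2) ^ (1 - α))
          (fun z _ => mul_nonneg (rpow_pos_of_pos (hp z) α).le
            (rpow_nonneg (mul_pos (hu.1 z.1) (hv.1 z.2)).le _)) (mem_univ (x, y))

lemma continuousOn_renyiSum :
    ContinuousOn (fun w : (X → ℝ) × (Y → ℝ) => renyiSum α p w.1 w.2)
      (openSimplex X ×ˢ openSimplex Y) :=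
  continuousOn_finsetSum _ fun z _ => continuousOn_const.mul <|
    (((continuous_apply z.1).comp continuous_fst).mul
      ((continuous_apply z.2).comp continuous_snd)).continuousOn.rpow_const
      fun _ hw => Or.inl (mul_pos (hw.1.1 z.1) (hw.2.1 z.2)).ne'

theorem exists_isMinOn_renyiSum [Nonempty X] [Nonempty Y] (hα : 1 < α) (hp : ∀ z, 0 < p z) :
    ∃ w ∈ openSimplex X ×ˢ openSimplex Y,
      IsMinOn (fun w => renyiSum α p w.1 w.2) (openSimplex X ×ˢ openSimplex Y) w := by
  obtain ⟨u₀, hu₀⟩ := openSimplex_nonempty (Z := X)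
  obtain ⟨v₀, hv₀⟩ := openSimplex_nonempty (Z := Y)
  -- `ε ^ (1 - α) → ∞` as `ε → 0⁺`: near the boundary `renyiSum` exceeds its value at `(u₀, v₀)`
  obtain ⟨ε, hε, hεu, hεv, hεS⟩ : ∃ ε > 0, (∀ x, ε ≤ u₀ x) ∧ (∀ y, ε ≤ v₀ y) ∧
      ∀ z, renyiSum α p u₀ v₀ ≤ p z ^ α * ε ^ (1 - α) := by
    have hu : ∀ᶠ ε in 𝓝[>] (0 : ℝ), ∀ x, ε ≤ u₀ x := eventually_all.2 fun x =>
      nhdsWithin_le_nhds (eventually_le_nhds (hu₀.1 x))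
    have hv : ∀ᶠ ε in 𝓝[>] (0 : ℝ), ∀ y, ε ≤ v₀ y := eventually_all.2 fun y =>
      nhdsWithin_le_nhds (eventually_le_nhds (hv₀.1 y))
    have hS : ∀ᶠ ε in 𝓝[>] (0 : ℝ), ∀ z, renyiSum α p u₀ v₀ ≤ p z ^ α * ε ^ (1 - α) :=
      eventually_all.2 fun z => ((tendsto_rpow_neg_nhdsGT_zero (by linarith)).const_mul_atTop
        (rpow_pos_of_pos (hp z) α)).eventually_ge_atTop _
    exact (eventually_mem_nhdsWithin.and (hu.and (hv.and hS))).exists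
  set K := {u ∈ stdSimplex ℝ X | ∀ x, ε ≤ u x} ×ˢ {v ∈ stdSimplex ℝ Y | ∀ y, ε ≤ v y}
  have hKsub : K ⊆ openSimplex X ×ˢ openSimplex Y := fun w hw =>
    ⟨⟨fun x => hε.trans_le (hw.1.2 x), hw.1.1.2⟩, ⟨fun y => hε.trans_le (hw.2.2 y), hw.2.1.2⟩⟩
  have hK₀ : (u₀, v₀) ∈ K :=
    ⟨⟨openSimplex_subset_stdSimplex hu₀, hεu⟩, ⟨openSimplex_subset_stdSimplex hv₀, hεv⟩⟩
  obtain ⟨w, hwK, hwmin⟩ := ((isCompact_setOf_stdSimplex_le ε).prod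
    (isCompact_setOf_stdSimplex_le ε)).exists_isMinOn ⟨_, hK₀⟩ (continuousOn_renyiSum.mono hKsub)
  refine ⟨w, hKsub hwK, fun w' hw' => ?_⟩
  by_cases hw'K : w' ∈ K
  · exact hwmin hw'K
  obtain ⟨x, y, hxy⟩ : ∃ x y, w'.1 x * w'.2 y ≤ ε := by
    simp only [K, Set.mem_prod, Set.mem_ofPred_eq, openSimplex_subset_stdSimplex hw'.1,
      openSimplex_subset_stdSimplex hw'.2, true_and, not_and_or, not_forall, not_le] at hw'K
    rcases hw'K with ⟨x, hx⟩ | ⟨y, hy⟩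
    · exact ⟨x, Classical.arbitrary Y, (mul_le_of_le_one_right (hw'.1.1 x).le
        (le_one_of_mem_openSimplex hw'.2 _)).trans hx.le⟩
    · exact ⟨Classical.arbitrary X, y, (mul_le_of_le_one_left (hw'.2.1 y).le
        (le_one_of_mem_openSimplex hw'.1 _)).trans hy.le⟩
  calc renyiSum α p w.1 w.2 ≤ renyiSum α p u₀ v₀ := hwmin hK₀
    _ ≤ p (x, y) ^ α * ε ^ (1 - α) := hεS _
    _ ≤ renyiSum α p w'.1 w'.2 := rpow_le_renyiSum hα.le hp hw'.1 hw'.2 hxy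

end Renyi

section Tilted

variable {X Y : Type*} [Fintype X] [Fintype Y] {α : ℝ} {p : X × Y → ℝ} {u : X → ℝ} {v : Y → ℝ}

lemma sum_tilted_fst (hα : α ≠ 1) (hp : ∀ z, 0 < p z) (hu : u ∈ openSimplex X)
    (hv : v ∈ openSimplex Y) (hmin : IsMinOn (fun u' => renyiSum α p u' v) (openSimplex X) u)
    (x : X) : ∑ y, tilted α p u v (x, y) = u x := by
  set a : X → ℝ := fun x => ∑ y, p (x, y) ^ α * v y ^ (1 - α)
  have hS : ∀ u' ∈ openSimplex X, renyiSum α p u' v = ∑ x, a x * u' x ^ (1 - α) := fun u' hu' =>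
    renyiSum_eq_sum_fst (fun x => (hu'.1 x).le) fun y => (hv.1 y).le
  have hslice : IsMinOn (fun u' => ∑ x, a x * u' x ^ (1 - α)) (openSimplex X) u := fun u' hu' => by
    simpa only [Set.mem_ofPred_eq, hS u' hu', hS u hu] using hmin hu'
  have key := mul_rpow_eq_of_isMinOn (sub_ne_zero.2 hα.symm) hslice hu x
  rw [← hS u hu] at key
  have hrow : ∑ y, tilted α p u v (x, y) = a x * u x ^ (1 - α) / renyiSum α p u v := by
    simp only [tilted, ← sum_div, a, sum_mul]
    exact congrArg (· / _) (sum_congr rfl fun y _ => by rw [mul_rpow (hu.1 x).le (hv.1 y).le]; ring)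
  rw [hrow, key, mul_div_cancel_left₀ _ (renyiSum_pos hp hu hv).ne']

lemma sum_tilted_snd (hα : α ≠ 1) (hp : ∀ z, 0 < p z) (hu : u ∈ openSimplex X)
    (hv : v ∈ openSimplex Y) (hmin : IsMinOn (fun v' => renyiSum α p u v') (openSimplex Y) v)
    (y : Y) : ∑ x, tilted α p u v (x, y) = v y := by
  set b : Y → ℝ := fun y => ∑ x, p (x, y) ^ α * u x ^ (1 - α)
  have hS : ∀ v' ∈ openSimplex Y, renyiSum α p u v' = ∑ y, b y * v' y ^ (1 - α) := fun v' hv' =>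
    renyiSum_eq_sum_snd (fun x => (hu.1 x).le) fun y => (hv'.1 y).le
  have hslice : IsMinOn (fun v' => ∑ y, b y * v' y ^ (1 - α)) (openSimplex Y) v := fun v' hv' => by
    simpa only [Set.mem_ofPred_eq, hS v' hv', hS v hv] using hmin hv'
  have key := mul_rpow_eq_of_isMinOn (sub_ne_zero.2 hα.symm) hslice hv y
  rw [← hS v hv] at key
  have hrow : ∑ x, tilted α p u v (x, y) = b y * v y ^ (1 - α) / renyiSum α p u v := by
    simp only [tilted, ← sum_div, b, sum_mul]
    exact congrArg (· / _) (sum_congr rfl fun x _ => by rw [mul_rpow (hu.1 x).le (hv.1 y).le]; ring)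
  rw [hrow, key, mul_div_cancel_left₀ _ (renyiSum_pos hp hu hv).ne']

end Tilted

section Variational

variable {X Y : Type*} [Fintype X] [Fintype Y]

/-- The functional `F̃_α^{LP}(q̃_{X,Y}, r_{X|Y})`. -/
def flp (α : ℝ) (pX : X → ℝ) (pYX : X → Y → ℝ) (qt : X × Y → ℝ) (r : Y → X → ℝ) : ℝ :=
  (α / (1 - α)) * klD qt (fun z : X × Y => (∑ y, qt (z.1, y)) * pYX z.1 z.2)
    + ∑ z : X × Y, qt z * log (r z.2 z.1 / ∑ y, qt (z.1, y))
    + (α / (1 - α)) * klD (fun x => ∑ y, qt (x, y)) pX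

lemma sum_mul_fst (f : X × Y → ℝ) (g : X → ℝ) :
    ∑ z, f z * g z.1 = ∑ x, (∑ y, f (x, y)) * g x := by
  simp only [Fintype.sum_prod_type, sum_mul]

lemma sum_snd_mem_openSimplex [Nonempty Y] {q : X × Y → ℝ} (hq : q ∈ openSimplex (X × Y)) :
    (fun x => ∑ y, q (x, y)) ∈ openSimplex X :=
  ⟨fun x => sum_pos (fun y _ => hq.1 (x, y)) univ_nonempty, by rw [← Fintype.sum_prod_type, hq.2]⟩

variable [Nonempty Y] {α : ℝ} {pX : X → ℝ} {pYX : X → Y → ℝ} {qt : X × Y → ℝ} {r : Y → X → ℝ}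
  {u : X → ℝ} {v : Y → ℝ}

/-- Each of the three sums is minus a Kullback–Leibler divergence. -/
lemma flp_eq (hα : α ≠ 1) (hpX : ∀ x, 0 < pX x) (hpYX : ∀ x y, 0 < pYX x y)
    (hqt : qt ∈ openSimplex (X × Y)) (hr : ∀ y x, 0 < r y x) (hu : u ∈ openSimplex X)
    (hv : v ∈ openSimplex Y) :
    flp α pX pYX qt r =
      1 / (α - 1) * (log (renyiSum α (fun z => pX z.1 * pYX z.1 z.2) u v)
          + ∑ z, qt z * log (tilted α (fun z => pX z.1 * pYX z.1 z.2) u v z / qt z))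
        + ∑ z, qt z * log (v z.2 * r z.2 z.1 / qt z)
        + ∑ x, (∑ y, qt (x, y)) * log (u x / ∑ y, qt (x, y)) := by
  have hS := renyiSum_pos (α := α) (fun z => mul_pos (hpX z.1) (hpYX z.1 z.2)) hu hv
  have hqX := (sum_snd_mem_openSimplex hqt).1
  have hlogS : log (renyiSum α (fun z => pX z.1 * pYX z.1 z.2) u v)
      = ∑ z, qt z * log (renyiSum α (fun z => pX z.1 * pYX z.1 z.2) u v) := by
    rw [← sum_mul, hqt.2, one_mul]
  rw [flp, klD, klD, ← sum_mul_fst qt fun x => log ((∑ y, qt (x, y)) / pX x),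
    ← sum_mul_fst qt fun x => log (u x / ∑ y, qt (x, y)), hlogS]
  simp only [mul_sum, ← sum_add_distrib]
  refine sum_congr rfl fun ⟨x, y⟩ _ => ?_
  have hA := (hqt.1 (x, y)).ne'
  have hB := (hqX x).ne'
  have hP := (hpX x).ne'
  have hQ := (hpYX x y).ne'
  have hU := (hu.1 x).ne'
  have hV := (hv.1 y).ne'
  have hR := (hr y x).ne'
  have hPQ := mul_pos (hpX x) (hpYX x y)
  have hUV := mul_pos (hu.1 x) (hv.1 y)
  simp only [tilted]
  rw [log_div hA (mul_ne_zero hB hQ), log_mul hB hQ, log_div hR hB, log_div hB hP,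
    log_div (div_pos (mul_pos (rpow_pos_of_pos hPQ α) (rpow_pos_of_pos hUV _)) hS).ne' hA,
    log_div (mul_pos (rpow_pos_of_pos hPQ α) (rpow_pos_of_pos hUV _)).ne' hS.ne',
    log_mul (rpow_pos_of_pos hPQ α).ne' (rpow_pos_of_pos hUV _).ne', log_rpow hPQ, log_rpow hUV,
    log_mul hP hQ, log_mul hU hV, log_div (mul_ne_zero hV hR) hA, log_mul hV hR, log_div hU hB]
  have h1 : (1 : ℝ) - α ≠ 0 := sub_ne_zero.2 hα.symm
  have h2 : α - 1 ≠ 0 := sub_ne_zero.2 hα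
  field_simp
  ring

theorem flp_le_renyiSum (hα : 1 < α) (hpX : ∀ x, 0 < pX x) (hpYX : ∀ x y, 0 < pYX x y)
    (hqt : qt ∈ openSimplex (X × Y)) (hr : ∀ y, r y ∈ openSimplex X) (hu : u ∈ openSimplex X)
    (hv : v ∈ openSimplex Y) :
    flp α pX pYX qt r ≤ 1 / (α - 1) * log (renyiSum α (fun z => pX z.1 * pYX z.1 z.2) u v) := by
  have hvr : (fun z : X × Y => v z.2 * r z.2 z.1) ∈ openSimplex (X × Y) :=
    ⟨fun z => mul_pos (hv.1 z.2) ((hr z.2).1 z.1), by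
      simp only [Fintype.sum_prod_type_right, ← mul_sum, (hr _).2, mul_one, hv.2]⟩
  have h₁ := sum_mul_log_div_nonpos hqt
    (tilted_mem_openSimplex (α := α) (fun z => mul_pos (hpX z.1) (hpYX z.1 z.2)) hu hv)
  have h₂ := sum_mul_log_div_nonpos hqt hvr
  have h₃ := sum_mul_log_div_nonpos (sum_snd_mem_openSimplex hqt) hu
  have hc : 0 ≤ 1 / (α - 1) := one_div_nonneg.2 (sub_nonneg.2 hα.le)
  rw [flp_eq hα.ne' hpX hpYX hqt (fun y => (hr y).1) hu hv, mul_add]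
  linarith [mul_nonpos_of_nonneg_of_nonpos hc h₁]

theorem flp_tilted (hα : α ≠ 1) (hpX : ∀ x, 0 < pX x) (hpYX : ∀ x y, 0 < pYX x y)
    (hu : u ∈ openSimplex X) (hv : v ∈ openSimplex Y)
    (hfst : ∀ x, ∑ y, tilted α (fun z => pX z.1 * pYX z.1 z.2) u v (x, y) = u x) :
    flp α pX pYX (tilted α (fun z => pX z.1 * pYX z.1 z.2) u v)
        (fun y x => tilted α (fun z => pX z.1 * pYX z.1 z.2) u v (x, y) / v y)
      = 1 / (α - 1) * log (renyiSum α (fun z => pX z.1 * pYX z.1 z.2) u v) := by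
  have ht := tilted_mem_openSimplex (α := α) (fun z => mul_pos (hpX z.1) (hpYX z.1 z.2)) hu hv
  rw [flp_eq hα hpX hpYX ht (fun y x => div_pos (ht.1 _) (hv.1 y)) hu hv]
  simp [hfst, (ht.1 _).ne', (hu.1 _).ne', (hv.1 _).ne', mul_div_cancel₀]

end Variational

section LapidothPfister

variable {X Y : Type*} [Fintype X] [Fintype Y] {α : ℝ} {pX : X → ℝ} {pYX : X → Y → ℝ}

lemma lpMI_le_renyiSum {u : X → ℝ} {v : Y → ℝ} (hu : u ∈ openSimplex X)
    (hv : v ∈ openSimplex Y) :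
    lpMI α pX pYX ≤ ((1 / (α - 1) * log (renyiSum α (fun z => pX z.1 * pYX z.1 z.2) u v) : ℝ) :
      EReal) :=
  sInf_le ⟨u, v, openSimplex_subset_stdSimplex hu, openSimplex_subset_stdSimplex hv, by
    rw [renyiDE, if_neg fun ⟨_, z, _, hz⟩ => (mul_pos (hu.1 z.1) (hv.1 z.2)).ne' hz]; rfl⟩

/-- A zero of `u` or `v` makes the Rényi divergence infinite, so only the open simplices matter. -/
lemma le_lpMI [Nonempty X] [Nonempty Y] (hα : 1 < α) (hpX : ∀ x, 0 < pX x)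
    (hpYX : ∀ x y, 0 < pYX x y) {c : ℝ}
    (h : ∀ u ∈ openSimplex X, ∀ v ∈ openSimplex Y,
      c ≤ 1 / (α - 1) * log (renyiSum α (fun z => pX z.1 * pYX z.1 z.2) u v)) :
    (c : EReal) ≤ lpMI α pX pYX := by
  refine le_sInf ?_
  rintro _ ⟨u, v, hu, hv, rfl⟩
  rw [renyiDE]
  split_ifs with hzero
  · exact le_top
  have hprod : ∀ z : X × Y, u z.1 * v z.2 ≠ 0 := fun z hz =>
    hzero ⟨hα, z, (mul_pos (hpX _) (hpYX _ _)).ne', hz⟩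
  have hu' : ∀ x, 0 < u x := fun x =>
    (hu.1 x).lt_of_ne' (left_ne_zero_of_mul (hprod (x, Classical.arbitrary Y)))
  have hv' : ∀ y, 0 < v y := fun y =>
    (hv.1 y).lt_of_ne' (right_ne_zero_of_mul (hprod (Classical.arbitrary X, y)))
  exact EReal.coe_le_coe_iff.2 (h u ⟨hu', hu.2⟩ v ⟨hv', hv.2⟩)

end LapidothPfister

end

theorem lpMI_eq_sup_FLP_general {X Y : Type*} [Fintype X] [Fintype Y] [Nonempty X] [Nonempty Y]
    (α : ℝ) (hα : 1 < α)
    (pX : X → ℝ) (hpXpos : ∀ x, 0 < pX x)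
    (pYX : X → Y → ℝ) (hpYXpos : ∀ x y, 0 < pYX x y) :
    IsGreatest
      {v : EReal | ∃ qt : X × Y → ℝ, IsPMF qt ∧ (∀ z, 0 < qt z) ∧
        ∃ r : Y → X → ℝ, (∀ y, IsPMF (r y)) ∧ (∀ y x, 0 < r y x) ∧
        v = (((α / (1 - α)) *
                klD qt (fun z : X × Y => (∑ y, qt (z.1, y)) * pYX z.1 z.2)
              + ∑ z : X × Y, qt z * Real.log (r z.2 z.1 / ∑ y, qt (z.1, y))
              + (α / (1 - α)) * klD (fun x => ∑ y, qt (x, y)) pX : ℝ) : EReal)}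
      (lpMI α pX pYX) := by
  have hupper : ∀ qt ∈ openSimplex (X × Y), ∀ r : Y → X → ℝ, (∀ y, r y ∈ openSimplex X) →
      (flp α pX pYX qt r : EReal) ≤ lpMI α pX pYX := fun qt hqt r hr =>
    le_lpMI hα hpXpos hpYXpos fun u hu v hv => flp_le_renyiSum hα hpXpos hpYXpos hqt hr hu hv
  have hp : ∀ z : X × Y, 0 < pX z.1 * pYX z.1 z.2 := fun z => mul_pos (hpXpos _) (hpYXpos _ _)
  obtain ⟨⟨u, v⟩, ⟨hu, hv⟩, hmin⟩ := exists_isMinOn_renyiSum hα hp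
  have hfst := sum_tilted_fst hα.ne' hp hu hv fun u' hu' => hmin (Set.mk_mem_prod hu' hv)
  have hsnd := sum_tilted_snd hα.ne' hp hu hv fun v' hv' => hmin (Set.mk_mem_prod hu hv')
  set qt := tilted α (fun z => pX z.1 * pYX z.1 z.2) u v
  have hqt : qt ∈ openSimplex (X × Y) := tilted_mem_openSimplex hp hu hv
  have hr : ∀ y, (fun x => qt (x, y) / v y) ∈ openSimplex X := fun y =>
    ⟨fun x => div_pos (hqt.1 _) (hv.1 y), by rw [← sum_div, hsnd, div_self (hv.1 y).ne']⟩
  refine ⟨⟨qt, openSimplex_subset_stdSimplex hqt, hqt.1, _,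
    fun y => openSimplex_subset_stdSimplex (hr y), fun y => (hr y).1, ?_⟩, ?_⟩
  · show lpMI α pX pYX = (flp α pX pYX qt fun y x => qt (x, y) / v y : EReal)
    refine le_antisymm ?_ (hupper qt hqt _ hr)
    rw [flp_tilted hα.ne' hpXpos hpYXpos hu hv hfst]
    exact lpMI_le_renyiSum hu hv
  · rintro _ ⟨qt, hqt, hqtpos, r, hr, hrpos, rfl⟩
    exact hupper qt ⟨hqtpos, hqt.2⟩ r fun y => ⟨hrpos y, (hr y).2⟩

/-- For `α > 1`, the Lapidoth--Pfister mutual information of order `α` is the supremum,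
over strictly positive joint distributions `q̃_{X,Y}` and strictly positive reverse
channels `r_{X|Y}`, of
`F̃_α^{LP}(q̃_{X,Y}, r) = (α/(1−α)) D(q̃_{X,Y} ‖ q̃_X p_{Y|X})
  + Σ_{x,y} q̃_{X,Y}(x,y) log(r(x|y)/q̃_X(x)) + (α/(1−α)) D(q̃_X ‖ p_X)`,
and the supremum is attained. -/
theorem lpMI_eq_sup_FLP {X Y : Type*} [Fintype X] [Fintype Y] [Nonempty X] [Nonempty Y]
    (α : ℝ) (hα : 1 < α)
    (pX : X → ℝ) (hpX : IsPMF pX) (hpXpos : ∀ x, 0 < pX x)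
    (pYX : X → Y → ℝ) (hpYX : ∀ x, IsPMF (pYX x)) (hpYXpos : ∀ x y, 0 < pYX x y) :
    IsGreatest
      {v : EReal | ∃ qt : X × Y → ℝ, IsPMF qt ∧ (∀ z, 0 < qt z) ∧
        ∃ r : Y → X → ℝ, (∀ y, IsPMF (r y)) ∧ (∀ y x, 0 < r y x) ∧
        v = (((α / (1 - α)) *
                klD qt (fun z : X × Y => (∑ y, qt (z.1, y)) * pYX z.1 z.2)
              + ∑ z : X × Y, qt z * Real.log (r z.2 z.1 / ∑ y, qt (z.1, y))
              + (α / (1 - α)) * klD (fun x => ∑ y, qt (x, y)) pX : ℝ) : EReal)}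
      (lpMI α pX pYX) :=
  lpMI_eq_sup_FLP_general α hα pX hpXpos pYX hpYXpos
end

section
/- Let α ∈ (1,∞), let p_X be a strictly positive probability distribution on 𝒳, p_{Y|X} a channel with p_{Y|X}(y|x) > 0 for all x, y, and let q̃_{Y|X} be a channel with q̃_{Y|X}(y|x) > 0 for all x, y. Then over all reverse channels r_{X|Y}, the functional F̃_α^C(q̃_{Y|X}, r_{X|Y}) is maximized by the posterior r*_{X|Y}(x|y) := p_X(x) q̃_{Y|X}(y|x) / Σ_{x'} p_X(x') q̃_{Y|X}(y|x'), i.e., F̃_α^C(q̃_{Y|X}, r_{X|Y}) ≤ F̃_α^C(q̃_{Y|X}, r*_{X|Y}) for every reverse channel r_{X|Y}. -/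
/-- Extended-real logarithm: `elog 0 = ⊥` (i.e. `log 0 = −∞`). -/
noncomputable def elog (t : ℝ) : EReal :=
  if t = 0 then ⊥ else ((Real.log t : ℝ) : EReal)

/-- `F̃_α^C(q̃_{Y|X}, r_{X|Y})`, valued in `ℝ ∪ {−∞}` (as `EReal`):
`(α/(1−α)) D(p_X q̃_{Y|X} ‖ p_X p_{Y|X}) + Σ_{x,y} p_X(x) q̃_{Y|X}(y|x) log(r(x|y)/p_X(x))`. -/
noncomputable def FtildeC {X Y : Type*} [Fintype X] [Fintype Y]
    (α : ℝ) (pX : X → ℝ) (pYX : X → Y → ℝ) (qt : X → Y → ℝ) (r : Y → X → ℝ) : EReal :=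
  (((α / (1 - α)) * klD (fun z : X × Y => pX z.1 * qt z.1 z.2)
      (fun z : X × Y => pX z.1 * pYX z.1 z.2) : ℝ) : EReal)
  + ∑ x, ∑ y, ((pX x * qt x y : ℝ) : EReal) * elog (r y x / pX x)

/-!
Only the cross term of `F̃_α^C` depends on `r`. If `r(x|y) = 0` at some point, that term is `−∞`
since every weight `p_X(x) q̃(y|x)` is positive. Otherwise, for each `y` separately, it is a
cross entropy `Σ_x w(x) log r(x|y)` (shifted by a constant), and Gibbs' inequality, i.e.
`log t ≤ t − 1`, shows it is maximized when `r(·|y)` is proportional to the weights `w`.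
-/

open Finset Real

lemma sum_mul_log_le_sum_mul_log_div_sum {ι : Type*} [Fintype ι] {w ρ : ι → ℝ}
    (hw : ∀ i, 0 < w i) (hρ : ∀ i, 0 < ρ i) (hρ1 : ∑ i, ρ i = 1) :
    ∑ i, w i * log (ρ i) ≤ ∑ i, w i * log (w i / ∑ j, w j) := by
  set W := ∑ j, w j
  have hW : 0 < W :=
    sum_pos (fun i _ => hw i) (nonempty_of_sum_ne_zero (hρ1 ▸ one_ne_zero))
  have hterm : ∀ i, w i * log (ρ i) - w i * log (w i / W) ≤ ρ i * W - w i := by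
    intro i
    have hwi := hw i
    calc w i * log (ρ i) - w i * log (w i / W) = w i * log (ρ i * W / w i) := by
          rw [← mul_sub, ← log_div (hρ i).ne' (div_pos hwi hW).ne', div_div_eq_mul_div]
      _ ≤ w i * (ρ i * W / w i - 1) :=
          mul_le_mul_of_nonneg_left (log_le_sub_one_of_pos (div_pos (mul_pos (hρ i) hW) hwi))
            hwi.le
      _ = ρ i * W - w i := by field_simp
  have hsum : ∑ i, (ρ i * W - w i) = 0 := by
    rw [sum_sub_distrib, ← sum_mul, hρ1, one_mul, sub_self]
  rw [← sub_nonpos, ← sum_sub_distrib, ← hsum]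
  exact sum_le_sum fun i _ => hterm i

lemma sum_mul_log_div_le_sum_mul_log_div_sum {ι : Type*} [Fintype ι] {w ρ p : ι → ℝ}
    (hw : ∀ i, 0 < w i) (hρ : ∀ i, 0 < ρ i) (hρ1 : ∑ i, ρ i = 1) (hp : ∀ i, 0 < p i) :
    ∑ i, w i * log (ρ i / p i) ≤ ∑ i, w i * log ((w i / ∑ j, w j) / p i) := by
  have hW : 0 < ∑ j, w j :=
    sum_pos (fun i _ => hw i) (nonempty_of_sum_ne_zero (hρ1 ▸ one_ne_zero))
  have hgibbs := sum_mul_log_le_sum_mul_log_div_sum hw hρ hρ1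
  simp only [fun i => log_div (hρ i).ne' (hp i).ne',
    fun i => log_div (div_pos (hw i) hW).ne' (hp i).ne', mul_sub, sum_sub_distrib]
  linarith

lemma EReal.coe_finsetSum {ι : Type*} (s : Finset ι) (f : ι → ℝ) :
    ((∑ i ∈ s, f i : ℝ) : EReal) = ∑ i ∈ s, (f i : EReal) :=
  map_sum (⟨⟨Real.toEReal, EReal.coe_zero⟩, EReal.coe_add⟩ : ℝ →+ EReal) f s

lemma sum_coe_mul_elog_of_ne_zero {ι : Type*} [Fintype ι] (w s : ι → ℝ) (hs : ∀ i, s i ≠ 0) :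
    ∑ i, (w i : EReal) * elog (s i) = ((∑ i, w i * log (s i) : ℝ) : EReal) := by
  simp only [elog, hs, if_false, EReal.coe_finsetSum, EReal.coe_mul]

lemma sum_coe_mul_elog_eq_bot {ι : Type*} [Fintype ι] {w s : ι → ℝ} {i : ι}
    (hw : 0 < w i) (hs : s i = 0) : ∑ j, (w j : EReal) * elog (s j) = ⊥ :=
  WithBot.sum_eq_bot_iff.2
    ⟨i, mem_univ i, by rw [elog, if_pos hs]; exact EReal.coe_mul_bot_of_pos hw⟩

theorem FtildeC_le_posterior_general {X Y : Type*} [Fintype X] [Fintype Y]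
    (α : ℝ)
    (pX : X → ℝ) (hpXpos : ∀ x, 0 < pX x)
    (pYX : X → Y → ℝ)
    (qt : X → Y → ℝ) (hqtpos : ∀ x y, 0 < qt x y) :
    ∀ r : Y → X → ℝ, (∀ y, IsPMF (r y)) →
      FtildeC α pX pYX qt r ≤
      FtildeC α pX pYX qt
        (fun y x => pX x * qt x y / ∑ x', pX x' * qt x' y) := by
  intro r hr
  have hw : ∀ x y, 0 < pX x * qt x y := fun x y => mul_pos (hpXpos x) (hqtpos x y)
  unfold FtildeC
  gcongr _ + ?_
  simp only [← Fintype.sum_prod_type' (fun x y => ((pX x * qt x y : ℝ) : EReal) * elog _)]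
  by_cases hz : ∃ x y, r y x = 0
  · obtain ⟨x, y, hxy⟩ := hz
    rw [sum_coe_mul_elog_eq_bot (i := (x, y)) (hw x y) (by simp [hxy])]
    exact bot_le
  · push Not at hz
    have hrpos : ∀ y x, 0 < r y x := fun y x => ((hr y).1 x).lt_of_ne (hz x y).symm
    have hposterior : ∀ y x, 0 < pX x * qt x y / ∑ x', pX x' * qt x' y := fun y x =>
      div_pos (hw x y) (sum_pos (fun x' _ => hw x' y) ⟨x, mem_univ x⟩)
    rw [sum_coe_mul_elog_of_ne_zero _ _
        fun z : X × Y => (div_pos (hrpos z.2 z.1) (hpXpos z.1)).ne',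
      sum_coe_mul_elog_of_ne_zero _ _
        fun z : X × Y => (div_pos (hposterior z.2 z.1) (hpXpos z.1)).ne',
      EReal.coe_le_coe_iff, Fintype.sum_prod_type_right, Fintype.sum_prod_type_right]
    exact sum_le_sum fun y _ =>
      sum_mul_log_div_le_sum_mul_log_div_sum (fun x => hw x y) (hrpos y) (hr y).2 hpXpos

/-- For `α > 1`, fixed `q̃_{Y|X} > 0`: over all reverse channels `r_{X|Y}`, the functional
`F̃_α^C(q̃_{Y|X}, ·)` is maximized by the posterior
`r*(x|y) = p_X(x) q̃_{Y|X}(y|x) / Σ_{x'} p_X(x') q̃_{Y|X}(y|x')`. -/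
theorem FtildeC_le_posterior {X Y : Type*} [Fintype X] [Fintype Y] [Nonempty X] [Nonempty Y]
    (α : ℝ) (hα : 1 < α)
    (pX : X → ℝ) (hpX : IsPMF pX) (hpXpos : ∀ x, 0 < pX x)
    (pYX : X → Y → ℝ) (hpYX : ∀ x, IsPMF (pYX x)) (hpYXpos : ∀ x y, 0 < pYX x y)
    (qt : X → Y → ℝ) (hqt : ∀ x, IsPMF (qt x)) (hqtpos : ∀ x y, 0 < qt x y) :
    ∀ r : Y → X → ℝ, (∀ y, IsPMF (r y)) →
      FtildeC α pX pYX qt r ≤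
      FtildeC α pX pYX qt
        (fun y x => pX x * qt x y / ∑ x', pX x' * qt x' y) :=
  FtildeC_le_posterior_general α pX hpXpos pYX qt hqtpos
end

section
/- Let α ∈ (0,1)∪(1,∞) and let p_{X,Y} be a strictly positive probability distribution on 𝒳×𝒴. (1) For any strictly positive probability distribution q_Y on 𝒴, the map q_X ↦ D_α(p_{X,Y} ‖ q_X q_Y), over probability distributions q_X on 𝒳, is minimized by q*_X(x) := ( Σ_y p_{X,Y}(x,y)^α q_Y(y)^{1−α} )^{1/α} / Σ_{x'} ( Σ_y p_{X,Y}(x',y)^α q_Y(y)^{1−α} )^{1/α}. (2) Symmetrically, for any strictly positive probability distribution q_X on 𝒳, the map q_Y ↦ D_α(p_{X,Y} ‖ q_X q_Y) is minimized by q*_Y(y) := ( Σ_x p_{X,Y}(x,y)^α q_X(x)^{1−α} )^{1/α} / Σ_{y'} ( Σ_x p_{X,Y}(x,y')^α q_X(x)^{1−α} )^{1/α}. -/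
open Finset Real

namespace IsPMF

variable {Z : Type*} [Fintype Z] {q : Z → ℝ}

lemma exists_pos (hq : IsPMF q) : ∃ z, 0 < q z := by
  by_contra! h
  have : ∑ z, q z = 0 := sum_eq_zero fun z _ => le_antisymm (h z) (hq.1 z)
  simp [hq.2] at this

lemma nonempty (hq : IsPMF q) : Nonempty Z :=
  let ⟨z, _⟩ := hq.exists_pos; ⟨z⟩

end IsPMF

namespace Real

variable {ι : Type*} (s : Finset ι) {α : ℝ} {B w : ι → ℝ}

theorem sum_rpow_mul_rpow_one_sub_le (hα₀ : 0 < α) (hα₁ : α < 1)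
    (hB : ∀ i ∈ s, 0 ≤ B i) (hw : ∀ i ∈ s, 0 ≤ w i) :
    ∑ i ∈ s, B i ^ α * w i ^ (1 - α) ≤ (∑ i ∈ s, B i) ^ α * (∑ i ∈ s, w i) ^ (1 - α) := by
  have h := inner_le_Lp_mul_Lq_of_nonneg s
    (holderConjugate_one_div hα₀ (sub_pos.mpr hα₁) (add_sub_cancel α 1)) (f := fun i => B i ^ α)
    (g := fun i => w i ^ (1 - α)) (fun i hi => rpow_nonneg (hB i hi) _)
    (fun i hi => rpow_nonneg (hw i hi) _)
  have hB' : ∀ i ∈ s, (B i ^ α) ^ (1 / α) = B i := fun i hi => by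
    rw [← rpow_mul (hB i hi), mul_one_div_cancel hα₀.ne', rpow_one]
  have hw' : ∀ i ∈ s, (w i ^ (1 - α)) ^ (1 / (1 - α)) = w i := fun i hi => by
    rw [← rpow_mul (hw i hi), mul_one_div_cancel (by linarith), rpow_one]
  rwa [sum_congr rfl hB', sum_congr rfl hw', one_div_one_div, one_div_one_div] at h

theorem rpow_sum_le_sum_rpow_mul_rpow_one_sub (hα : 1 < α)
    (hB : ∀ i ∈ s, 0 ≤ B i) (hw : ∀ i ∈ s, 0 < w i) (hw₁ : ∑ i ∈ s, w i = 1) :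
    (∑ i ∈ s, B i) ^ α ≤ ∑ i ∈ s, B i ^ α * w i ^ (1 - α) := by
  have h := rpow_arith_mean_le_arith_mean_rpow s w (fun i => B i / w i)
    (fun i hi => (hw i hi).le) hw₁ (fun i hi => div_nonneg (hB i hi) (hw i hi).le) hα.le
  have hmean : ∑ i ∈ s, w i * (B i / w i) = ∑ i ∈ s, B i :=
    sum_congr rfl fun i hi => mul_div_cancel₀ _ (hw i hi).ne'
  have hpow : ∑ i ∈ s, w i * (B i / w i) ^ α = ∑ i ∈ s, B i ^ α * w i ^ (1 - α) :=
    sum_congr rfl fun i hi => by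
      rw [div_rpow (hB i hi) (hw i hi).le, rpow_sub (hw i hi), rpow_one]
      field_simp
  rwa [hmean, hpow] at h

theorem sum_mul_rpow_one_sub_of_rpow_inv [Nonempty ι] [Fintype ι] {A : ι → ℝ} (hα : α ≠ 0)
    (hA : ∀ i, 0 < A i) :
    ∑ i, A i * (A i ^ (1 / α) / ∑ j, A j ^ (1 / α)) ^ (1 - α) = (∑ j, A j ^ (1 / α)) ^ α := by
  set S := ∑ j, A j ^ (1 / α)
  have hB : ∀ i, 0 < A i ^ (1 / α) := fun i => rpow_pos_of_pos (hA i) _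
  have hS : 0 < S := sum_pos (fun i _ => hB i) univ_nonempty
  have hAB : ∀ i, (A i ^ (1 / α)) ^ α = A i := fun i => by
    rw [one_div, rpow_inv_rpow (hA i).le hα]
  have hterm : ∀ i, A i * (A i ^ (1 / α) / S) ^ (1 - α) = A i ^ (1 / α) / S ^ (1 - α) :=
    fun i => calc
      _ = (A i ^ (1 / α)) ^ α * (A i ^ (1 / α)) ^ (1 - α) / S ^ (1 - α) := by
        rw [hAB, div_rpow (hB i).le hS.le, mul_div_assoc]
      _ = A i ^ (1 / α) / S ^ (1 - α) := by rw [← rpow_add (hB i), add_sub_cancel, rpow_one]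
  simp only [hterm, ← sum_div]
  rw [div_eq_iff (rpow_pos_of_pos hS _).ne', ← rpow_add hS, add_sub_cancel, rpow_one]

end Real

section renyiDE

variable {Z W : Type*} [Fintype Z] [Fintype W] {α : ℝ} {p q : Z → ℝ}

lemma renyiDE_of_lt_one (hα : α < 1) :
    renyiDE α p q = ((1 / (α - 1) * log (∑ z, p z ^ α * q z ^ (1 - α)) : ℝ) : EReal) :=
  if_neg fun h => (h.1.trans hα).false

lemma renyiDE_of_forall_pos (hq : ∀ z, 0 < q z) :
    renyiDE α p q = ((1 / (α - 1) * log (∑ z, p z ^ α * q z ^ (1 - α)) : ℝ) : EReal) :=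
  if_neg fun ⟨_, z, _, hz⟩ => (hq z).ne' hz

lemma renyiDE_eq_top (hα : 1 < α) {z : Z} (hp : p z ≠ 0) (hq : q z = 0) :
    renyiDE α p q = ⊤ :=
  if_pos ⟨hα, z, hp, hq⟩

lemma renyiDE_comp_equiv (e : W ≃ Z) (p q : Z → ℝ) :
    renyiDE α (p ∘ e) (q ∘ e) = renyiDE α p q := by
  simp only [renyiDE, Function.comp_apply, e.exists_congr_left, e.apply_symm_apply,
    e.sum_comp (fun z => p z ^ α * q z ^ (1 - α))]

end renyiDE

section tiltedMarginal

variable {X Y : Type*} [Fintype Y] {α : ℝ}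

noncomputable def tiltedMarginal (α : ℝ) (p : X × Y → ℝ) (qY : Y → ℝ) (x : X) : ℝ :=
  ∑ y, p (x, y) ^ α * qY y ^ (1 - α)

lemma sum_rpow_mul_prod_rpow_eq [Fintype X] (p : X × Y → ℝ) {qX : X → ℝ} {qY : Y → ℝ}
    (hqX : ∀ x, 0 ≤ qX x) (hqY : ∀ y, 0 ≤ qY y) :
    ∑ z : X × Y, p z ^ α * (qX z.1 * qY z.2) ^ (1 - α)
      = ∑ x, tiltedMarginal α p qY x * qX x ^ (1 - α) := by
  simp only [Fintype.sum_prod_type, tiltedMarginal, sum_mul, mul_rpow (hqX _) (hqY _)]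
  exact sum_congr rfl fun x _ => sum_congr rfl fun y _ => by ring

noncomputable def optimalMarginal [Fintype X] (α : ℝ) (p : X × Y → ℝ) (qY : Y → ℝ) (x : X) : ℝ :=
  tiltedMarginal α p qY x ^ (1 / α) / ∑ x', tiltedMarginal α p qY x' ^ (1 / α)

variable [Nonempty Y] {p : X × Y → ℝ} {qY : Y → ℝ}

lemma tiltedMarginal_pos (hp : ∀ z, 0 < p z) (hqY : ∀ y, 0 < qY y) (x : X) :
    0 < tiltedMarginal α p qY x :=
  sum_pos (fun y _ => mul_pos (rpow_pos_of_pos (hp _) _) (rpow_pos_of_pos (hqY y) _))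
    univ_nonempty

variable [Fintype X]

lemma renyiDE_optimalMarginal_mul [Nonempty X] (hα : α ≠ 0) (hp : ∀ z, 0 < p z)
    (hqY : ∀ y, 0 < qY y) :
    renyiDE α p (fun z : X × Y => optimalMarginal α p qY z.1 * qY z.2) =
      ((1 / (α - 1) * log ((∑ x, tiltedMarginal α p qY x ^ (1 / α)) ^ α) : ℝ) : EReal) := by
  have hA := tiltedMarginal_pos (α := α) hp hqY
  have hS : 0 < ∑ x, tiltedMarginal α p qY x ^ (1 / α) :=
    sum_pos (fun x _ => rpow_pos_of_pos (hA x) _) univ_nonempty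
  have hopt : ∀ x, 0 < optimalMarginal α p qY x := fun x => div_pos (rpow_pos_of_pos (hA x) _) hS
  rw [renyiDE_of_forall_pos (q := fun z : X × Y => optimalMarginal α p qY z.1 * qY z.2)
      fun z => mul_pos (hopt z.1) (hqY z.2),
    sum_rpow_mul_prod_rpow_eq p (fun x => (hopt x).le) (fun y => (hqY y).le)]
  unfold optimalMarginal
  rw [sum_mul_rpow_one_sub_of_rpow_inv hα hA]

theorem renyiDE_optimalMarginal_mul_le (hα : (0 < α ∧ α < 1) ∨ 1 < α) (hp : ∀ z, 0 < p z)
    (hqY : ∀ y, 0 < qY y) {qX : X → ℝ} (hqX : IsPMF qX) :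
    renyiDE α p (fun z : X × Y => optimalMarginal α p qY z.1 * qY z.2) ≤
      renyiDE α p (fun z : X × Y => qX z.1 * qY z.2) := by
  have : Nonempty X := hqX.nonempty
  have hα₀ : 0 < α := hα.elim (·.1) fun h => by linarith
  set A := tiltedMarginal α p qY
  have hA : ∀ x, 0 < A x := tiltedMarginal_pos hp hqY
  have hB : ∀ x ∈ univ, 0 ≤ A x ^ (1 / α) := fun x _ => (rpow_pos_of_pos (hA x) _).le
  have hAB : ∀ x, (A x ^ (1 / α)) ^ α = A x := fun x => by
    rw [one_div, rpow_inv_rpow (hA x).le hα₀.ne']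
  rw [renyiDE_optimalMarginal_mul hα₀.ne' hp hqY]
  rcases hα with ⟨-, hα₁⟩ | hα₁
  · rw [renyiDE_of_lt_one hα₁, sum_rpow_mul_prod_rpow_eq p hqX.1 (fun y => (hqY y).le),
      EReal.coe_le_coe_iff]
    have hle := sum_rpow_mul_rpow_one_sub_le univ hα₀ hα₁ hB (fun x _ => hqX.1 x)
    simp only [hAB, hqX.2, one_rpow, mul_one] at hle
    have hpos : 0 < ∑ x, A x * qX x ^ (1 - α) := by
      obtain ⟨x₀, hx₀⟩ := hqX.exists_pos
      exact sum_pos' (fun x _ => mul_nonneg (hA x).le (rpow_nonneg (hqX.1 x) _))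
        ⟨x₀, mem_univ _, mul_pos (hA x₀) (rpow_pos_of_pos hx₀ _)⟩
    exact mul_le_mul_of_nonpos_left (log_le_log hpos hle) (one_div_nonpos.mpr (by linarith))
  · by_cases hzero : ∃ x, qX x = 0
    · obtain ⟨x, hx⟩ := hzero
      have htop : renyiDE α p (fun z : X × Y => qX z.1 * qY z.2) = ⊤ :=
        renyiDE_eq_top hα₁ (z := (x, Classical.arbitrary Y)) (hp _).ne' (by simp [hx])
      exact htop ▸ le_top
    have hqXpos : ∀ x, 0 < qX x := fun x => (hqX.1 x).lt_of_ne fun h => hzero ⟨x, h.symm⟩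
    rw [renyiDE_of_forall_pos (q := fun z : X × Y => qX z.1 * qY z.2)
        fun z => mul_pos (hqXpos z.1) (hqY z.2),
      sum_rpow_mul_prod_rpow_eq p hqX.1 (fun y => (hqY y).le), EReal.coe_le_coe_iff]
    have hle := rpow_sum_le_sum_rpow_mul_rpow_one_sub univ hα₁ hB (fun x _ => hqXpos x) hqX.2
    simp only [hAB] at hle
    have hS : 0 < ∑ x, A x ^ (1 / α) := sum_pos (fun x _ => rpow_pos_of_pos (hA x) _) univ_nonempty
    exact mul_le_mul_of_nonneg_left (log_le_log (rpow_pos_of_pos hS _) hle)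
      (one_div_nonneg.mpr (by linarith))

end tiltedMarginal

theorem renyi_product_min_update_general {X Y : Type*} [Fintype X] [Fintype Y]
    (α : ℝ) (hα : (0 < α ∧ α < 1) ∨ 1 < α)
    (p : X × Y → ℝ) (hppos : ∀ z, 0 < p z) :
    (∀ qY : Y → ℝ, IsPMF qY → (∀ y, 0 < qY y) →
      ∀ qX : X → ℝ, IsPMF qX →
        renyiDE α p (fun z : X × Y =>
          ((∑ y, p (z.1, y) ^ α * qY y ^ (1 - α)) ^ (1 / α) /
            ∑ x', (∑ y, p (x', y) ^ α * qY y ^ (1 - α)) ^ (1 / α)) * qY z.2) ≤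
        renyiDE α p (fun z : X × Y => qX z.1 * qY z.2)) ∧
    (∀ qX : X → ℝ, IsPMF qX → (∀ x, 0 < qX x) →
      ∀ qY : Y → ℝ, IsPMF qY →
        renyiDE α p (fun z : X × Y => qX z.1 *
          ((∑ x, p (x, z.2) ^ α * qX x ^ (1 - α)) ^ (1 / α) /
            ∑ y', (∑ x, p (x, y') ^ α * qX x ^ (1 - α)) ^ (1 / α))) ≤
        renyiDE α p (fun z : X × Y => qX z.1 * qY z.2)) := by
  refine ⟨fun qY hqY hqYpos qX hqX => ?_, fun qX hqX hqXpos qY hqY => ?_⟩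
  · have : Nonempty Y := hqY.nonempty
    exact renyiDE_optimalMarginal_mul_le hα hppos hqYpos hqX
  · have : Nonempty X := hqX.nonempty
    have h := renyiDE_optimalMarginal_mul_le hα (p := p ∘ Equiv.prodComm Y X)
      (fun z => hppos _) hqXpos hqY
    rw [← renyiDE_comp_equiv (Equiv.prodComm Y X) p, ← renyiDE_comp_equiv (Equiv.prodComm Y X) p]
    convert h using 2 <;> ext z <;> simp [optimalMarginal, tiltedMarginal, mul_comm]

/-- Alternating minimization of `D_α(p_{X,Y} ‖ q_X q_Y)` over the two marginals:
(1) for fixed strictly positive `q_Y`, the minimizing `q_X` is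
`q*_X(x) ∝ (Σ_y p_{X,Y}(x,y)^α q_Y(y)^{1−α})^{1/α}`; (2) symmetrically in `q_Y`. -/
theorem renyi_product_min_update {X Y : Type*} [Fintype X] [Fintype Y]
    [Nonempty X] [Nonempty Y]
    (α : ℝ) (hα : (0 < α ∧ α < 1) ∨ 1 < α)
    (p : X × Y → ℝ) (hp : IsPMF p) (hppos : ∀ z, 0 < p z) :
    (∀ qY : Y → ℝ, IsPMF qY → (∀ y, 0 < qY y) →
      ∀ qX : X → ℝ, IsPMF qX →
        renyiDE α p (fun z : X × Y =>
          ((∑ y, p (z.1, y) ^ α * qY y ^ (1 - α)) ^ (1 / α) /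
            ∑ x', (∑ y, p (x', y) ^ α * qY y ^ (1 - α)) ^ (1 / α)) * qY z.2) ≤
        renyiDE α p (fun z : X × Y => qX z.1 * qY z.2)) ∧
    (∀ qX : X → ℝ, IsPMF qX → (∀ x, 0 < qX x) →
      ∀ qY : Y → ℝ, IsPMF qY →
        renyiDE α p (fun z : X × Y => qX z.1 *
          ((∑ x, p (x, z.2) ^ α * qX x ^ (1 - α)) ^ (1 / α) /
            ∑ y', (∑ x, p (x, y') ^ α * qX x ^ (1 - α)) ^ (1 / α))) ≤
        renyiDE α p (fun z : X × Y => qX z.1 * qY z.2)) :=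
  renyi_product_min_update_general α hα p hppos
end
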